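/- Let s and s' be two strategy profiles that agree on every vertex except possibly at a single vertex i, and suppose t_i > 0. Then Φ₁(s') − Φ₁(s) = t_i · (u_i(s') − u_i(s)). In other words, Φ₁ is a weighted potential function (with weight t_i for player i) for the graph coordination game. -/

import Mathlib

open Finset

/-- Tie-strength of a pair of vertices: for adjacent pairs it is the edge weight plus the
sum, over common neighbours `k`, of `w i k + w j k`; it is `0` for non-adjacent pairs. -/
noncomputable def tieStrength {V : Type*} [Fintype V] (G : SimpleGraph V) [DecidableRel G.Adj]
    (w : V → V → ℝ) (i j : V) : ℝ :=
  if G.Adj i j then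
    w i j + ∑ k : V, (if G.Adj i k ∧ G.Adj j k then w i k + w j k else 0)
  else 0

/-- `t_i`: the sum of the tie-strengths of the edges adjacent to `i`. -/
noncomputable def tieTotal {V : Type*} [Fintype V] (G : SimpleGraph V) [DecidableRel G.Adj]
    (w : V → V → ℝ) (i : V) : ℝ :=
  ∑ j : V, tieStrength G w i j

/-- The agreement weight `a_i(s)` of vertex `i` in profile `s`:
the sum of tie-strengths `t(i,j)` over the vertices `j` choosing the same strategy as `i`. -/
noncomputable def agreeWeight {V : Type*} [Fintype V] (G : SimpleGraph V) [DecidableRel G.Adj]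
    (w : V → V → ℝ) {r : ℕ} (s : V → Fin r) (i : V) : ℝ :=
  ∑ j : V, if s j = s i then tieStrength G w i j else 0

/-- The utility `u_i(s) = a_i(s) / t_i` of player `i`. -/
noncomputable def utility1 {V : Type*} [Fintype V] (G : SimpleGraph V) [DecidableRel G.Adj]
    (w : V → V → ℝ) {r : ℕ} (s : V → Fin r) (i : V) : ℝ :=
  agreeWeight G w s i / tieTotal G w i

/-- The potential `Φ₁(s)`: the sum of tie-strengths over unordered edges whose endpoints
choose the same strategy, i.e. `(1/2) Σ_i Σ_{j : s j = s i} t(i,j)`. -/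
noncomputable def phi1 {V : Type*} [Fintype V] (G : SimpleGraph V) [DecidableRel G.Adj]
    (w : V → V → ℝ) {r : ℕ} (s : V → Fin r) : ℝ :=
  (1 / 2) * ∑ i : V, ∑ j : V, if s j = s i then tieStrength G w i j else 0

/-- The total tie-strength `W` of the network: the sum of `t(i,j)` over unordered pairs. -/
noncomputable def totalTie {V : Type*} [Fintype V] (G : SimpleGraph V) [DecidableRel G.Adj]
    (w : V → V → ℝ) : ℝ :=
  (1 / 2) * ∑ i : V, ∑ j : V, tieStrength G w i j

/-!
With symmetric tie weights, `Φ₁` is half the sum of all agreement weights. A deviation of the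
single player `i` changes only the entries `t j k` with `j = i` or `k = i` of that double sum,
and by symmetry the column `k = i` contributes as much as the row `j = i`, so `Φ₁` changes by
exactly `a_i(s') - a_i(s) = t_i (u_i(s') - u_i(s))`.
-/

theorem sum_sum_eq_of_eq_zero_off_cross {V M : Type*} [Fintype V] [AddCommGroup M]
    (f : V → V → M) (i : V) (hf : ∀ j k, j ≠ i → k ≠ i → f j k = 0) :
    ∑ j, ∑ k, f j k = ∑ k, f i k + ∑ j, f j i - f i i := by
  classical
  have row_off : ∀ j ∈ univ.erase i, ∑ k, f j k = f j i := fun j hj =>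
    Fintype.sum_eq_single i fun k hk => hf j k (ne_of_mem_erase hj) hk
  rw [← add_sum_erase _ _ (mem_univ i), sum_congr rfl row_off, sum_erase_eq_sub (mem_univ i)]
  abel

def agreement {V α M : Type*} [Fintype V] [DecidableEq α] [AddCommMonoid M]
    (t : V → V → M) (s : V → α) (j : V) : M :=
  ∑ k, if s k = s j then t j k else 0

theorem sum_agreement_sub_sum_agreement {V α M : Type*} [Fintype V] [DecidableEq α]
    [AddCommGroup M] (t : V → V → M) (ht : ∀ j k, t j k = t k j) (s s' : V → α) (i : V)
    (hagree : ∀ j, j ≠ i → s' j = s j) :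
    ∑ j, agreement t s' j - ∑ j, agreement t s j
      = 2 • (agreement t s' i - agreement t s i) := by
  set f : V → V → M := fun j k =>
    (if s' k = s' j then t j k else 0) - (if s k = s j then t j k else 0) with hf
  have f_comm : ∀ j k, f j k = f k j := by
    intro j k
    simp only [hf, eq_comm (a := s' k), eq_comm (a := s k), ht j k]
  have f_off : ∀ j k, j ≠ i → k ≠ i → f j k = 0 := by
    intro j k hj hk
    simp only [hf, hagree j hj, hagree k hk, sub_self]
  have f_diag : f i i = 0 := by simp [hf]
  calc ∑ j, agreement t s' j - ∑ j, agreement t s j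
      = ∑ j, ∑ k, f j k := by simp only [agreement, hf, ← sum_sub_distrib]
    _ = ∑ k, f i k + ∑ k, f i k := by
      rw [sum_sum_eq_of_eq_zero_off_cross f i f_off, f_diag, sub_zero]
      simp only [f_comm _ i]
    _ = 2 • (agreement t s' i - agreement t s i) := by
      simp only [two_nsmul, agreement, hf, sum_sub_distrib]

theorem tieStrength_comm {V : Type*} [Fintype V] (G : SimpleGraph V) [DecidableRel G.Adj]
    {w : V → V → ℝ} (hw_symm : ∀ i j, w i j = w j i) (i j : V) :
    tieStrength G w i j = tieStrength G w j i := by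
  simp only [tieStrength, G.adj_comm i j, hw_symm i j, and_comm (a := G.Adj i _), add_comm (w i _)]

theorem phi1_sub_phi1_eq_agreeWeight_sub {V : Type*} [Fintype V] (G : SimpleGraph V)
    [DecidableRel G.Adj] {w : V → V → ℝ} (hw_symm : ∀ i j, w i j = w j i) {r : ℕ}
    (s s' : V → Fin r) (i : V)
    (hagree : ∀ j, j ≠ i → s' j = s j) :
    phi1 G w s' - phi1 G w s = agreeWeight G w s' i - agreeWeight G w s i := by
  have h := sum_agreement_sub_sum_agreement _ (tieStrength_comm G hw_symm) s s' i hagree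
  simp only [agreement, two_nsmul] at h
  simp only [phi1, agreeWeight, ← mul_sub, h]
  ring

theorem phi1_is_weighted_potential_general {V : Type*} [Fintype V]
    (G : SimpleGraph V) [DecidableRel G.Adj] (w : V → V → ℝ)
    (hw_symm : ∀ i j, w i j = w j i)
    (r : ℕ)
    (s s' : V → Fin r) (i : V)
    (hagree : ∀ j, j ≠ i → s' j = s j)
    (hti : 0 < tieTotal G w i) :
    phi1 G w s' - phi1 G w s
      = tieTotal G w i * (utility1 G w s' i - utility1 G w s i) := by
  rw [phi1_sub_phi1_eq_agreeWeight_sub G hw_symm s s' i hagree, utility1, utility1, ← sub_div,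
    mul_div_cancel₀ _ hti.ne']

/-- If two strategy profiles `s` and `s'` agree on every vertex except
possibly at a single vertex `i`, and `t_i > 0`, then
`Φ₁(s') − Φ₁(s) = t_i · (u_i(s') − u_i(s))`: `Φ₁` is a weighted potential function
(with weight `t_i` for player `i`) for the graph coordination game. -/
theorem phi1_is_weighted_potential {V : Type*} [Fintype V] [DecidableEq V]
    (G : SimpleGraph V) [DecidableRel G.Adj] (w : V → V → ℝ)
    (hw_nonneg : ∀ i j, 0 ≤ w i j)
    (hw_symm : ∀ i j, w i j = w j i)
    (hw_diag : ∀ i, w i i = 0)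
    (hw_adj : ∀ i j, ¬ G.Adj i j → w i j = 0)
    (r : ℕ) (hr : 2 ≤ r)
    (s s' : V → Fin r) (i : V)
    (hagree : ∀ j, j ≠ i → s' j = s j)
    (hti : 0 < tieTotal G w i) :
    phi1 G w s' - phi1 G w s
      = tieTotal G w i * (utility1 G w s' i - utility1 G w s i) :=
  phi1_is_weighted_potential_general G w hw_symm r s s' i hagree hti
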